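/- Let φ : ℝ × M → M be a continuous flow on a metric space M, let S ⊆ M be a set, and let W be a neighborhood of S such that there exists an open neighborhood U of S with φ(t, u) ∈ W for all t ≥ 0 and u ∈ U. If K ⊆ M is compact and every point of K is attracted to S in the sense that for each x ∈ K there exists T_x > 0 with φ(T_x, ·) continuous and φ(T_x, x) ∈ U, with φ(T_x, ·) mapping some neighborhood of x into U, then there exists T_K > 0 such that φ(T, k) ∈ W for all k ∈ K and all T > T_K. -/
import Mathlib


/-- If a compact set `K` is such that every point eventually enters a neighborhood `U`
of `S` whose forward orbit stays in `W`, then after some uniform time `T_K` the whole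
of `K` is mapped into `W`. -/
theorem stmt_0 {M : Type*} [MetricSpace M] (φ : ℝ → M → M)
    (hcont : Continuous fun p : ℝ × M => φ p.1 p.2)
    (hφ0 : ∀ x, φ 0 x = x)
    (hφadd : ∀ s t x, φ (s + t) x = φ s (φ t x))
    (S U W K : Set M) (hSU : S ⊆ U) (hUW : U ⊆ W) (hUopen : IsOpen U)
    (hforward : ∀ t ≥ (0 : ℝ), ∀ u ∈ U, φ t u ∈ W)
    (hK : IsCompact K)
    (hattr : ∀ x ∈ K, ∃ Tx > (0 : ℝ), Continuous (φ Tx) ∧ φ Tx x ∈ U ∧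
      ∃ B ∈ nhds x, ∀ b ∈ B, φ Tx b ∈ U) :
    ∃ TK > (0 : ℝ), ∀ k ∈ K, ∀ T > TK, φ T k ∈ W := by
  choose! Tx hTxpos _hc _hU B hB hBU using hattr
  obtain ⟨t, htK, hcov⟩ := hK.elim_nhds_subcover (fun x => interior (B x))
    (fun x hx => interior_mem_nhds.2 (hB x hx))
  have hsum : (0:ℝ) ≤ t.sum fun x => Tx x :=
    Finset.sum_nonneg fun i hi => (hTxpos i (htK i hi)).le
  refine ⟨1 + t.sum fun x => Tx x, by linarith, ?_⟩
  intro k hk T hT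
  obtain ⟨x, hxt, hkx⟩ := Set.mem_iUnion₂.1 (hcov hk)
  have hxK := htK x hxt
  have hle : Tx x ≤ t.sum fun x => Tx x :=
    Finset.single_le_sum (fun i hi => (hTxpos i (htK i hi)).le) hxt
  have hT0 : (0:ℝ) ≤ T - Tx x := by linarith
  have heq : φ T k = φ (T - Tx x) (φ (Tx x) k) := by
    rw [← hφadd]; ring_nf
  rw [heq]
  exact hforward _ hT0 _ (hBU x hxK k (interior_subset hkx))
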